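/- arXiv:1703.01362 — 3 statements merged into one kernel-verified Lean document; each statement's English description precedes it below -/
import Mathlib

section
/- Let W be a channel from a finite set X to a finite set Z, M ≥ 2, and for codewords x_1,…,x_M ∈ X let P̂(z) := (1/M) Σ_{w=1}^M W(z|x_w). Let P_Z be a probability distribution on Z with minimum positive mass μ_Z := min{P_Z(z) : P_Z(z) > 0}, and suppose P̂ ≪ P_Z for all codeword choices. Define g_2(x_1,…,x_M) := D(P̂‖P_Z). Then replacing any single codeword x_i by x_i' changes g_2 by at most (1/M) log(M|Z|/μ_Z²). -/
open Finset

/-- Relative entropy (natural log) between two pmfs on a finite set. -/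
noncomputable def KL {Z : Type*} [Fintype Z] (P Q : Z → ℝ) : ℝ :=
  ∑ z, P z * Real.log (P z / Q z)

/-- Minimum positive mass of a distribution on a finite set. -/
noncomputable def minPosMass {Z : Type*} [Fintype Z] (P : Z → ℝ) : ℝ :=
  sInf {r : ℝ | ∃ z, P z = r ∧ 0 < r}

/-!
Both mixtures share the part `C = (1/M) ∑_{w ≠ i} W(·|x_w)` and differ by `a/M` versus `b/M`,
with `a = W(·|x_i)`, `b = W(·|x_i')`. For `p = C + a/M`, `p' = C + b/M` one has pointwise
`p log (p/q) - p' log (p'/q) = C log (p/p') + (a/M) log (p/q) - (b/M) log (p'/q)`,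
and the three terms are at most `a/M` (since `log u ≤ u - 1`), `(a/M) log (1/μ)` (since
`p ≤ 1` and `q ≥ μ`) and `-(b/M) log (b/(M q))` (since `p' ≥ b/M`). Summing over `z` and
dropping `D(b ‖ P_Z) ≥ 0` bounds the difference by `(1 + log M + log (1/μ)) / M`. When `P_Z`
has two atoms, `|Z|/μ ≥ 4 > e` absorbs the `1`; when `P_Z` is a point mass, so is every
`W(·|x)`, and the two mixtures coincide.
-/

open Real

section Pointwise

variable {c s s' q : ℝ}

lemma mul_log_div_sub_mul_log_div (hc : 0 ≤ c) (hs : 0 ≤ s) (hs' : 0 ≤ s')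
    (hq : 0 < q) :
    (c + s) * log ((c + s) / q) - (c + s') * log ((c + s') / q) =
      c * log ((c + s) / (c + s')) + s * log ((c + s) / q) - s' * log ((c + s') / q) := by
  rcases (add_nonneg hc hs).eq_or_lt with hp | hp
  · obtain ⟨rfl, rfl⟩ : c = 0 ∧ s = 0 := ⟨by linarith, by linarith⟩
    simp
  rcases (add_nonneg hc hs').eq_or_lt with hp' | hp'
  · obtain ⟨rfl, rfl⟩ : c = 0 ∧ s' = 0 := ⟨by linarith, by linarith⟩
    simp
  rw [log_div hp.ne' hq.ne', log_div hp'.ne' hq.ne', log_div hp.ne' hp'.ne']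
  ring

lemma mul_log_add_div_add_le (hc : 0 ≤ c) (hs : 0 ≤ s) (hs' : 0 ≤ s') :
    c * log ((c + s) / (c + s')) ≤ s := by
  rcases hc.eq_or_lt with rfl | hc
  · simpa using hs
  calc c * log ((c + s) / (c + s'))
      ≤ c * log ((c + s) / c) := by gcongr; linarith
    _ ≤ c * ((c + s) / c - 1) := by gcongr; exact log_le_sub_one_of_pos (by positivity)
    _ = s := by field_simp; ring

end Pointwise

lemma mul_log_div_sub_mul_log_div_le {c a b q t μ : ℝ} (hc : 0 ≤ c) (ha : 0 ≤ a)
    (hb : 0 ≤ b) (ht : 0 < t) (hμ : 0 < μ) (hμq : μ ≤ q) (hp1 : c + t * a ≤ 1) :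
    (c + t * a) * log ((c + t * a) / q) - (c + t * b) * log ((c + t * b) / q) ≤
      t * (a * (1 + log (1 / μ)) + b * log (1 / t) - b * log (b / q)) := by
  have hq : 0 < q := hμ.trans_le hμq
  have hlog_le : t * a * log ((c + t * a) / q) ≤ t * a * log (1 / μ) := by
    rcases ha.eq_or_lt with rfl | ha
    · simp
    gcongr
  have hneg_log_le :
      -(t * b * log ((c + t * b) / q)) ≤ t * (b * log (1 / t) - b * log (b / q)) := by
    rcases hb.eq_or_lt with rfl | hb
    · simp
    have hsplit : b * log (1 / t) - b * log (b / q) = -(b * log (t * b / q)) := by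
      rw [one_div, log_inv, mul_div_assoc, log_mul ht.ne' (by positivity)]
      ring
    rw [hsplit, mul_neg, ← mul_assoc]
    gcongr
    linarith
  rw [mul_log_div_sub_mul_log_div hc (by positivity) (by positivity) hq]
  linarith [mul_log_add_div_add_le hc (by positivity : 0 ≤ t * a) (by positivity : 0 ≤ t * b)]

lemma le_mul_log_div {p q : ℝ} (hp : 0 ≤ p) (hq : 0 ≤ q) (hpq : q = 0 → p = 0) :
    p - q ≤ p * log (p / q) := by
  rcases hp.eq_or_lt with rfl | hp
  · simpa using hq
  have hq : 0 < q := hq.lt_of_ne fun h => hp.ne' (hpq h.symm)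
  calc p - q = p * (1 - (p / q)⁻¹) := by field_simp
    _ ≤ p * log (p / q) := by gcongr; exact one_sub_inv_le_log_of_pos (by positivity)

lemma KL_nonneg {Z : Type*} [Fintype Z] {P Q : Z → ℝ} (hP : ∀ z, 0 ≤ P z)
    (hQ : ∀ z, 0 ≤ Q z) (hPQ : ∀ z, Q z = 0 → P z = 0)
    (hsum : ∑ z, Q z ≤ ∑ z, P z) : 0 ≤ KL P Q :=
  calc 0 ≤ ∑ z, (P z - Q z) := by rw [sum_sub_distrib]; linarith
    _ ≤ KL P Q := sum_le_sum fun z _ => le_mul_log_div (hP z) (hQ z) (hPQ z)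

lemma KL_add_mul_sub_KL_add_mul_le {Z : Type*} [Fintype Z] {C a b Q : Z → ℝ} {t μ : ℝ}
    (hC : ∀ z, 0 ≤ C z) (ha : ∀ z, 0 ≤ a z) (ha1 : ∑ z, a z = 1)
    (hb : ∀ z, 0 ≤ b z) (hb1 : ∑ z, b z = 1) (hQ : ∀ z, 0 ≤ Q z) (hQ1 : ∑ z, Q z ≤ 1)
    (haQ : ∀ z, Q z = 0 → a z = 0) (hbQ : ∀ z, Q z = 0 → b z = 0)
    (ht : 0 < t) (hμ : 0 < μ) (hμQ : ∀ z, 0 < Q z → μ ≤ Q z)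
    (hP1 : ∑ z, (C z + t * a z) = 1) :
    KL (fun z => C z + t * a z) Q - KL (fun z => C z + t * b z) Q ≤
      t * (1 + log (1 / t) + log (1 / μ)) := by
  have hp1 (z : Z) : C z + t * a z ≤ 1 := by
    rw [← hP1]
    exact single_le_sum (fun w _ => add_nonneg (hC w) (mul_nonneg ht.le (ha w))) (mem_univ z)
  have hterm (z : Z) :
      (C z + t * a z) * log ((C z + t * a z) / Q z) -
          (C z + t * b z) * log ((C z + t * b z) / Q z) ≤
        t * (a z * (1 + log (1 / μ)) + b z * log (1 / t) - b z * log (b z / Q z)) := by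
    rcases (hQ z).eq_or_lt with hz | hz
    · simp [← hz, haQ z hz.symm, hbQ z hz.symm]
    exact mul_log_div_sub_mul_log_div_le (hC z) (ha z) (hb z) ht hμ (hμQ z hz) (hp1 z)
  calc KL (fun z => C z + t * a z) Q - KL (fun z => C z + t * b z) Q
      ≤ ∑ z, t * (a z * (1 + log (1 / μ)) + b z * log (1 / t) - b z * log (b z / Q z)) := by
        rw [KL, KL, ← sum_sub_distrib]
        exact sum_le_sum fun z _ => hterm z
    _ = t * (1 + log (1 / t) + log (1 / μ) - KL b Q) := by
        simp only [← mul_sum, sum_sub_distrib, sum_add_distrib, ← sum_mul, ha1, hb1, KL]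
        ring
    _ ≤ t * (1 + log (1 / t) + log (1 / μ)) := by
        have := KL_nonneg hb hQ hbQ (hb1 ▸ hQ1)
        gcongr
        linarith

section MinPosMass

variable {Z : Type*} [Fintype Z] {P : Z → ℝ}

lemma minPosMass_le {z : Z} (hz : 0 < P z) : minPosMass P ≤ P z :=
  csInf_le ⟨0, fun _ ⟨_, _, hr⟩ => hr.le⟩ ⟨z, rfl, hz⟩

lemma minPosMass_pos (h : ∃ z, 0 < P z) : 0 < minPosMass P := by
  obtain ⟨z, hz⟩ := h
  set S := {r : ℝ | ∃ z, P z = r ∧ 0 < r}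
  have hfin : S.Finite := (Set.finite_range P).subset fun _ ⟨z, hz, _⟩ => ⟨z, hz⟩
  have hS : S.Nonempty := ⟨P z, z, rfl, hz⟩
  obtain ⟨_, _, hpos⟩ := hS.csInf_mem hfin
  exact hpos

lemma exists_pos_of_sum_eq_one (hP1 : ∑ z, P z = 1) : ∃ z, 0 < P z := by
  by_contra! h
  linarith [sum_nonpos fun z (_ : z ∈ univ) => h z]

lemma minPosMass_le_one (hP : ∀ z, 0 ≤ P z) (hP1 : ∑ z, P z = 1) : minPosMass P ≤ 1 := by
  obtain ⟨z, hz⟩ := exists_pos_of_sum_eq_one hP1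
  exact (minPosMass_le hz).trans (hP1 ▸ single_le_sum (fun w _ => hP w) (mem_univ z))

lemma one_le_log_card_div_minPosMass (hP : ∀ z, 0 ≤ P z) (hP1 : ∑ z, P z = 1) {z₀ z₁ : Z}
    (hne : z₀ ≠ z₁) (h₀ : 0 < P z₀) (h₁ : 0 < P z₁) :
    1 ≤ log (Fintype.card Z / minPosMass P) := by
  classical
  have hμ := minPosMass_pos ⟨z₀, h₀⟩
  have hpair : P z₀ + P z₁ ≤ 1 := by
    rw [← sum_pair hne, ← hP1]
    exact sum_le_sum_of_subset_of_nonneg (subset_univ _) fun z _ _ => hP z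
  have hμ_half : minPosMass P ≤ 1 / 2 := by linarith [minPosMass_le h₀, minPosMass_le h₁]
  have hcard : (2 : ℝ) ≤ Fintype.card Z := by
    exact_mod_cast Fintype.one_lt_card_iff.mpr ⟨z₀, z₁, hne⟩
  rw [le_log_iff_exp_le (by positivity)]
  calc exp 1 ≤ 4 := (exp_one_lt_d9.trans (by norm_num)).le
    _ ≤ Fintype.card Z / minPosMass P := by rw [le_div_iff₀ hμ]; linarith

lemma one_add_log_add_log_le_log_mul_card_div_sq (hP : ∀ z, 0 ≤ P z) (hP1 : ∑ z, P z = 1)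
    {z₀ z₁ : Z} (hne : z₀ ≠ z₁) (h₀ : 0 < P z₀) (h₁ : 0 < P z₁) {m : ℝ}
    (hm : 0 < m) :
    1 + log m + log (1 / minPosMass P) ≤ log (m * Fintype.card Z / minPosMass P ^ 2) := by
  have hμ := minPosMass_pos ⟨z₀, h₀⟩
  have : Nonempty Z := ⟨z₀⟩
  have hsplit : m * Fintype.card Z / minPosMass P ^ 2 =
      m * (Fintype.card Z / minPosMass P) * (1 / minPosMass P) := by
    field_simp
  rw [hsplit, log_mul (by positivity) (by positivity), log_mul (by positivity) (by positivity)]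
  linarith [one_le_log_card_div_minPosMass hP hP1 hne h₀ h₁]

lemma log_mul_card_div_minPosMass_sq_nonneg (hP : ∀ z, 0 ≤ P z) (hP1 : ∑ z, P z = 1) {m : ℝ}
    (hm : 1 ≤ m) : 0 ≤ log (m * Fintype.card Z / minPosMass P ^ 2) := by
  obtain ⟨z, hz⟩ := exists_pos_of_sum_eq_one hP1
  have : Nonempty Z := ⟨z⟩
  have hμ := minPosMass_pos ⟨z, hz⟩
  refine log_nonneg ((one_le_div₀ (by positivity)).2 ?_)
  calc minPosMass P ^ 2 ≤ 1 := pow_le_one₀ hμ.le (minPosMass_le_one hP hP1)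
    _ ≤ m * Fintype.card Z :=
      one_le_mul_of_one_le_of_one_le hm (Nat.one_le_cast.mpr Fintype.card_pos)

end MinPosMass

lemma eq_pi_single_of_forall_ne {Z : Type*} [Fintype Z] [DecidableEq Z] {a : Z → ℝ} {z₀ : Z}
    (h : ∀ z, z ≠ z₀ → a z = 0) (h1 : ∑ z, a z = 1) : a = Pi.single z₀ 1 := by
  rw [sum_eq_single z₀ (fun z _ hz => h z hz) (by simp)] at h1
  funext z
  by_cases hz : z = z₀
  · simp [hz, h1]
  · simp [hz, h z hz]

section Mixture

variable {ι X Z : Type*} [Fintype ι] [DecidableEq ι]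

lemma mul_sum_update_eq_mul_sum_erase_add (t : ℝ) (W : X → Z → ℝ) (x : ι → X) (i : ι)
    (x' : X) :
    (fun z => t * ∑ w, W (Function.update x i x' w) z) =
      fun z => t * ∑ w ∈ univ.erase i, W (x w) z + t * W x' z := by
  funext z
  rw [← add_sum_erase _ _ (mem_univ i), Function.update_self,
    sum_congr rfl fun w hw => by rw [Function.update_of_ne (ne_of_mem_erase hw)]]
  ring

lemma sum_mul_sum_erase_add_mul [Fintype Z] {W : X → Z → ℝ} (hW1 : ∀ x, ∑ z, W x z = 1)
    (t : ℝ) (x : ι → X) (i : ι) (y : X) :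
    ∑ z, (t * ∑ w ∈ univ.erase i, W (x w) z + t * W y z) = t * Fintype.card ι := by
  rw [sum_add_distrib, ← mul_sum, ← mul_sum, sum_comm]
  simp only [hW1, sum_const, nsmul_eq_mul, mul_one, cast_card_erase_of_mem (mem_univ i),
    card_univ]
  ring

end Mixture

theorem kl_bounded_difference {X Z : Type*} [Fintype X] [Fintype Z]
    (M : ℕ) (hM : 2 ≤ M) (W : X → Z → ℝ)
    (hW0 : ∀ x z, 0 ≤ W x z) (hW1 : ∀ x, ∑ z, W x z = 1)
    (PZ : Z → ℝ) (hPZ0 : ∀ z, 0 ≤ PZ z) (hPZ1 : ∑ z, PZ z = 1)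
    (hac : ∀ x z, PZ z = 0 → W x z = 0)
    (x : Fin M → X) (i : Fin M) (x' : X) :
    |KL (fun z => (1 / (M : ℝ)) * ∑ w, W (x w) z) PZ -
      KL (fun z => (1 / (M : ℝ)) * ∑ w, W (Function.update x i x' w) z) PZ|
      ≤ (1 / (M : ℝ)) *
        Real.log ((M : ℝ) * (Fintype.card Z : ℝ) / (minPosMass PZ) ^ 2) := by
  classical
  have hM0 : (0 : ℝ) < M := Nat.cast_pos.mpr (by omega)
  obtain ⟨z₀, hz₀⟩ := exists_pos_of_sum_eq_one hPZ1
  have hμ : 0 < minPosMass PZ := minPosMass_pos ⟨z₀, hz₀⟩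
  have hP := mul_sum_update_eq_mul_sum_erase_add (1 / (M : ℝ)) W x i (x i)
  rw [Function.update_eq_self] at hP
  rw [hP, mul_sum_update_eq_mul_sum_erase_add]
  have hC (z : Z) : 0 ≤ 1 / (M : ℝ) * ∑ w ∈ univ.erase i, W (x w) z :=
    mul_nonneg (by positivity) (sum_nonneg fun w _ => hW0 _ z)
  have hP1 (y : X) :
      ∑ z, (1 / (M : ℝ) * ∑ w ∈ univ.erase i, W (x w) z + 1 / M * W y z) = 1 := by
    rw [sum_mul_sum_erase_add_mul hW1, Fintype.card_fin, one_div_mul_cancel hM0.ne']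
  by_cases hsupp : ∃ z₁, z₀ ≠ z₁ ∧ 0 < PZ z₁
  · obtain ⟨z₁, hne, hz₁⟩ := hsupp
    have hbound : 1 / (M : ℝ) * (1 + log (1 / (1 / M)) + log (1 / minPosMass PZ)) ≤
        1 / M * log (M * Fintype.card Z / minPosMass PZ ^ 2) := by
      rw [one_div_one_div]
      exact mul_le_mul_of_nonneg_left
        (one_add_log_add_log_le_log_mul_card_div_sq hPZ0 hPZ1 hne hz₀ hz₁ hM0) (by positivity)
    rw [abs_sub_le_iff]
    constructor <;>
      exact (KL_add_mul_sub_KL_add_mul_le hC (hW0 _) (hW1 _) (hW0 _) (hW1 _) hPZ0 hPZ1.le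
        (hac _) (hac _) (by positivity) hμ (fun _ => minPosMass_le) (hP1 _)).trans hbound
  · push Not at hsupp
    have hδ (y : X) : W y = Pi.single z₀ 1 :=
      eq_pi_single_of_forall_ne
        (fun z hz => hac y z ((hsupp z (Ne.symm hz)).antisymm (hPZ0 z))) (hW1 y)
    rw [hδ (x i), hδ x', sub_self, abs_zero]
    exact mul_nonneg (by positivity) (log_mul_card_div_minPosMass_sq_nonneg hPZ0 hPZ1
      (by exact_mod_cast (by omega : 1 ≤ M)))
end

section
/- Let X, Z be finite sets, W a channel from X to Z, P_X a distribution on X, and P_Z(z) = Σ_x P_X(x) W(z|x) with minimum positive mass μ_Z. If X_1,…,X_M are i.i.d. with distribution P_X and P̂(z) = (1/M) Σ_{w=1}^M W(z|X_w), then for all real γ, E[ D(P̂ ‖ P_Z) ] ≤ log(1/μ_Z + 1) · Pr[ log( W(Z|X)/P_Z(Z) ) > γ ] + exp(γ)/M, where (X,Z) ∼ P_X × W in the probability on the right. -/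
/-!
Expanding the relative entropy of the empirical output distribution over the codewords, codeword
`w` contributes `E[W(z|X_w) log(Σ_v W(z|X_v) / (M P_Z(z)))]`. Conditioning on `X_w = x` and applying
Jensen's inequality for the concave logarithm to the other `M - 1` codewords, whose outputs have
mean `P_Z(z)`, bounds this by `E[log(W(Z|X) / (M P_Z(Z)) + 1)]`. On the event
`log(W(Z|X)/P_Z(Z)) > γ` the integrand is at most `log(1/μ_Z + 1)`, since `W ≤ 1` and
`P_Z(Z) ≥ μ_Z`; off it, `log(1 + t) ≤ t` bounds it by `W(Z|X) / (M P_Z(Z)) ≤ exp γ / M`.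
-/

open Finset

open Real

lemma sum_mul_log_le_log_sum_mul {α : Type*} [Fintype α] {q y : α → ℝ}
    (hq0 : ∀ a, 0 ≤ q a) (hq1 : ∑ a, q a = 1) (hy : ∀ a, 0 < y a) :
    ∑ a, q a * log (y a) ≤ log (∑ a, q a * y a) := by
  simpa using strictConcaveOn_log_Ioi.concaveOn.le_map_sum (t := univ)
    (fun a _ => hq0 a) hq1 (fun a _ => Set.mem_Ioi.2 (hy a))

section IIDSums

variable {ι X : Type*} [Fintype ι] [DecidableEq ι] [Fintype X] {p g : X → ℝ}

lemma sum_pi_prod_eq_one (hp : ∑ x, p x = 1) :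
    ∑ c : ι → X, ∏ i, p (c i) = 1 := by
  rw [← Fintype.prod_sum]
  simp [hp]

lemma sum_pi_prod_mul_eq_sum_mul_sum (p : X → ℝ) (i : ι)
    (F : X → ({j // j ≠ i} → X) → ℝ) :
    ∑ c : ι → X, (∏ j, p (c j)) * F (c i) (fun j => c j)
      = ∑ x, p x * ∑ c : {j // j ≠ i} → X, (∏ j, p (c j)) * F x c := by
  simp_rw [Finset.mul_sum, ← Fintype.sum_prod_type']
  rw [← (Equiv.funSplitAt i X).sum_comp]
  refine Finset.sum_congr rfl fun c _ => ?_
  rw [Fintype.prod_eq_mul_prod_subtype_ne _ i]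
  simp only [Equiv.funSplitAt_apply]
  ring

lemma sum_pi_prod_mul_apply (hp : ∑ x, p x = 1) (g : X → ℝ) (i : ι) :
    ∑ c : ι → X, (∏ j, p (c j)) * g (c i) = ∑ x, p x * g x := by
  simpa only [← Finset.sum_mul, sum_pi_prod_eq_one hp, one_mul] using
    sum_pi_prod_mul_eq_sum_mul_sum p i fun x _ => g x

lemma sum_pi_prod_mul_sum_apply (hp : ∑ x, p x = 1) (g : X → ℝ) :
    ∑ c : ι → X, (∏ j, p (c j)) * ∑ i, g (c i) = Fintype.card ι * ∑ x, p x * g x := by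
  simp_rw [Finset.mul_sum]
  rw [Finset.sum_comm]
  simp [sum_pi_prod_mul_apply hp, Finset.mul_sum]

lemma sum_pi_prod_mul_log_add_sum_div_le (hp0 : ∀ x, 0 ≤ p x) (hp1 : ∑ x, p x = 1)
    (hg0 : ∀ x, 0 ≤ g x) {a b : ℝ} (ha : 0 < a) (hb : 0 < b)
    (hmean : Fintype.card ι * ∑ x, p x * g x ≤ b) :
    ∑ c : ι → X, (∏ j, p (c j)) * log ((a + ∑ j, g (c j)) / b) ≤ log (a / b + 1) := by
  have hsum_nonneg (c : ι → X) : 0 ≤ ∑ j, g (c j) := Finset.sum_nonneg fun j _ => hg0 (c j)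
  calc _ ≤ log (∑ c : ι → X, (∏ j, p (c j)) * ((a + ∑ j, g (c j)) / b)) :=
        sum_mul_log_le_log_sum_mul (fun c => Finset.prod_nonneg fun j _ => hp0 (c j))
          (sum_pi_prod_eq_one hp1) fun c => by have := hsum_nonneg c; positivity
    _ = log ((a + Fintype.card ι * ∑ x, p x * g x) / b) := by
        simp_rw [mul_div_assoc', ← Finset.sum_div, mul_add, Finset.sum_add_distrib,
          ← Finset.sum_mul, sum_pi_prod_eq_one hp1, one_mul, sum_pi_prod_mul_sum_apply hp1]
    _ ≤ log (a / b + 1) := by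
        rw [div_add_one hb.ne']
        have : 0 ≤ ∑ x, p x * g x := Finset.sum_nonneg fun x _ => mul_nonneg (hp0 x) (hg0 x)
        gcongr

lemma sum_pi_prod_mul_mul_log_sum_div_le (hp0 : ∀ x, 0 ≤ p x) (hp1 : ∑ x, p x = 1)
    (hg0 : ∀ x, 0 ≤ g x) {m : ℝ} (hm : Fintype.card ι ≤ m) (i : ι) :
    ∑ c : ι → X, (∏ j, p (c j)) * (g (c i) * log ((∑ j, g (c j)) / (m * ∑ x, p x * g x)))
      ≤ ∑ x, p x * (g x * log (g x / (m * ∑ x, p x * g x) + 1)) := by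
  set s := ∑ x, p x * g x
  have hm_pos : 0 < m := lt_of_lt_of_le (by exact_mod_cast Fintype.card_pos_iff.2 ⟨i⟩) hm
  calc _ = ∑ c : ι → X, (∏ j, p (c j)) *
          (g (c i) * log ((g (c i) + ∑ j : {j // j ≠ i}, g (c j)) / (m * s))) :=
        Finset.sum_congr rfl fun c _ => by rw [Fintype.sum_eq_add_sum_subtype_ne _ i]
    _ = ∑ x, p x * ∑ c : {j // j ≠ i} → X,
          (∏ j, p (c j)) * (g x * log ((g x + ∑ j, g (c j)) / (m * s))) :=
        sum_pi_prod_mul_eq_sum_mul_sum p i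
          fun x c' => g x * log ((g x + ∑ j, g (c' j)) / (m * s))
    _ ≤ _ := by
        refine Finset.sum_le_sum fun x _ => ?_
        rcases (hp0 x).eq_or_lt with hpx | hpx
        · simp [← hpx]
        rcases (hg0 x).eq_or_lt with hgx | hgx
        · simp [← hgx]
        have hs : 0 < s := lt_of_lt_of_le (mul_pos hpx hgx)
          (Finset.single_le_sum (fun y _ => mul_nonneg (hp0 y) (hg0 y)) (Finset.mem_univ x))
        have hmean : (Fintype.card {j // j ≠ i} : ℝ) * s ≤ m * s := by
          gcongr
          exact le_trans (Nat.cast_le.2 (Fintype.card_subtype_le _)) hm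
        rw [Finset.sum_congr rfl fun c _ => mul_left_comm _ (g x) _, ← Finset.mul_sum]
        gcongr
        exact sum_pi_prod_mul_log_add_sum_div_le hp0 hp1 hg0 hgx (by positivity) hmean

end IIDSums

lemma KL_mean_eq {ι Z : Type*} [Fintype ι] [Fintype Z] (Q : ι → Z → ℝ) (P : Z → ℝ) (m : ℝ) :
    KL (fun z => (1 / m) * ∑ i, Q i z) P
      = (1 / m) * ∑ i, ∑ z, Q i z * log ((∑ j, Q j z) / (m * P z)) := by
  rw [KL, Finset.sum_comm, Finset.mul_sum]
  refine Finset.sum_congr rfl fun z _ => ?_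
  rw [one_div_mul_eq_div, div_div, ← Finset.sum_mul]
  ring

theorem expected_KL_le {ι X Z : Type*} [Fintype ι] [DecidableEq ι] [Nonempty ι] [Fintype X]
    [Fintype Z] (W : X → Z → ℝ) (hW0 : ∀ x z, 0 ≤ W x z) (PX : X → ℝ) (hPX0 : ∀ x, 0 ≤ PX x)
    (hPX1 : ∑ x, PX x = 1) (PZ : Z → ℝ) (hPZ : ∀ z, PZ z = ∑ x, PX x * W x z) :
    ∑ c : ι → X, (∏ i, PX (c i)) *
        KL (fun z => (1 / (Fintype.card ι : ℝ)) * ∑ i, W (c i) z) PZ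
      ≤ ∑ x, ∑ z, PX x * W x z * log (W x z / (Fintype.card ι * PZ z) + 1) := by
  obtain rfl : PZ = fun z => ∑ x, PX x * W x z := funext hPZ
  set m : ℝ := (Fintype.card ι : ℝ)
  have hm : 0 < m := by simp [m, Fintype.card_pos]
  calc _ = (1 / m) * ∑ i, ∑ z, ∑ c : ι → X,
          (∏ j, PX (c j)) * (W (c i) z * log ((∑ j, W (c j) z) / (m * ∑ x, PX x * W x z))) := by
        simp only [KL_mean_eq]
        simp only [Finset.mul_sum]
        rw [Finset.sum_comm]
        refine Finset.sum_congr rfl fun i _ => ?_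
        rw [Finset.sum_comm]
        refine Finset.sum_congr rfl fun z _ => Finset.sum_congr rfl fun c _ => ?_
        ring
    _ ≤ (1 / m) * ∑ _i : ι, ∑ z, ∑ x,
          PX x * (W x z * log (W x z / (m * ∑ x, PX x * W x z) + 1)) := by
        gcongr with i _ z _
        exact sum_pi_prod_mul_mul_log_sum_div_le hPX0 hPX1 (hW0 · z) le_rfl i
    _ = _ := by
        rw [Finset.sum_const, Finset.card_univ, nsmul_eq_mul, ← mul_assoc,
          one_div_mul_cancel hm.ne', one_mul, Finset.sum_comm]
        simp_rw [mul_assoc]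

section MinPosMass

variable {Z : Type*} [Fintype Z] {P : Z → ℝ}

lemma finite_setOf_pos_mass (P : Z → ℝ) : {r : ℝ | ∃ z, P z = r ∧ 0 < r}.Finite :=
  (Set.finite_range P).subset fun _ ⟨z, hz, _⟩ => ⟨z, hz⟩

end MinPosMass

lemma log_div_mul_add_one_le {t s μ m : ℝ} (γ : ℝ) (ht : 0 < t) (ht1 : t ≤ 1) (hμ : 0 < μ)
    (hμs : μ ≤ s) (hm : 1 ≤ m) :
    log (t / (m * s) + 1) ≤ log (1 / μ + 1) * (if γ < log (t / s) then 1 else 0) + exp γ / m := by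
  have hs : 0 < s := hμ.trans_le hμs
  split_ifs with hγ
  · have : t / (m * s) ≤ 1 / μ := div_le_div₀ zero_le_one ht1 hμ (by nlinarith)
    have := log_le_log (by positivity) (add_le_add_left this 1)
    have := div_pos (exp_pos γ) (zero_lt_one.trans_le hm)
    linarith
  · have hratio : t / s ≤ exp γ := by
      rw [← exp_log (div_pos ht hs)]
      exact exp_le_exp.2 (not_lt.1 hγ)
    calc log (t / (m * s) + 1) ≤ t / (m * s) := by
          linarith [log_le_sub_one_of_pos (by positivity : 0 < t / (m * s) + 1)]
      _ = t / s / m := by rw [div_div, mul_comm]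
      _ ≤ exp γ / m := by gcongr
      _ = _ := by ring

/-- Expected relative entropy of the output distribution induced by an i.i.d. random
code of size `M` (expectation written as a finite sum over codebooks) is bounded by
`log(1/μ_Z + 1) · Pr[log(W(Z|X)/P_Z(Z)) > γ] + exp(γ)/M`. -/
theorem expected_resolvability_bound {X Z : Type*} [Fintype X] [Fintype Z]
    (M : ℕ) (hM : 1 ≤ M) (W : X → Z → ℝ)
    (hW0 : ∀ x z, 0 ≤ W x z) (hW1 : ∀ x, ∑ z, W x z = 1)
    (PX : X → ℝ) (hPX0 : ∀ x, 0 ≤ PX x) (hPX1 : ∑ x, PX x = 1)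
    (PZ : Z → ℝ) (hPZ : ∀ z, PZ z = ∑ x, PX x * W x z)
    (γ : ℝ) :
    (∑ c : Fin M → X, (∏ w, PX (c w)) *
        KL (fun z => (1 / (M : ℝ)) * ∑ w, W (c w) z) PZ)
      ≤ Real.log (1 / minPosMass PZ + 1) *
          (∑ x, ∑ z, PX x * W x z *
            (if γ < Real.log (W x z / PZ z) then 1 else 0))
        + Real.exp γ / (M : ℝ) := by
  have : NeZero M := ⟨by omega⟩
  have hmass : ∑ x, ∑ z, PX x * W x z = 1 := by simp_rw [← Finset.mul_sum, hW1, mul_one, hPX1]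
  have hPZ_pos {x z} (h : 0 < PX x * W x z) : 0 < PZ z := (hPZ z).symm ▸ h.trans_le
    (Finset.single_le_sum (fun y _ => mul_nonneg (hPX0 y) (hW0 y z)) (Finset.mem_univ x))
  have hμ : 0 < minPosMass PZ := by
    obtain ⟨x, -, hx⟩ := Finset.exists_ne_zero_of_sum_ne_zero (hmass.symm ▸ one_ne_zero)
    obtain ⟨z, -, hz⟩ := Finset.exists_ne_zero_of_sum_ne_zero hx
    exact minPosMass_pos ⟨z, hPZ_pos ((mul_nonneg (hPX0 x) (hW0 x z)).lt_of_ne' hz)⟩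
  have hW_le_one (x z) : W x z ≤ 1 :=
    hW1 x ▸ Finset.single_le_sum (fun z' _ => hW0 x z') (Finset.mem_univ z)
  calc _ ≤ ∑ x, ∑ z, PX x * W x z * log (W x z / (M * PZ z) + 1) := by
        simpa using expected_KL_le (ι := Fin M) W hW0 PX hPX0 hPX1 PZ hPZ
    _ ≤ ∑ x, ∑ z, (log (1 / minPosMass PZ + 1) *
          (PX x * W x z * (if γ < log (W x z / PZ z) then 1 else 0))
          + PX x * W x z * (exp γ / M)) := by
        gcongr with x _ z _
        rcases (mul_nonneg (hPX0 x) (hW0 x z)).eq_or_lt with h | h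
        · simp [← h]
        have hW : 0 < W x z := pos_of_mul_pos_right h (hPX0 x)
        calc _ ≤ PX x * W x z * (log (1 / minPosMass PZ + 1) *
              (if γ < log (W x z / PZ z) then 1 else 0) + exp γ / M) :=
            mul_le_mul_of_nonneg_left (log_div_mul_add_one_le γ hW (hW_le_one x z) hμ
              (minPosMass_le (hPZ_pos h)) (by exact_mod_cast hM)) h.le
          _ = _ := by ring
    _ = _ := by
        simp only [Finset.sum_add_distrib, ← Finset.mul_sum, ← Finset.sum_mul, hW1, mul_one, hPX1,
          one_mul]
end

section
/- Let Y be a finite set, P_0, P_1 probability distributions on Y with P_0 everywhere positive, let ℓ, m ≥ 1, n ≥ mℓ, and let P_PPM be the product distribution on Y^n formed by ℓ independent blocks each distributed as P^{m,1} (the single-pulse mixture defined by P^{m,1}(y) = (1/m) Σ_{i=1}^m P_1(y_i) Π_{j≠i} P_0(y_j)) followed by n − mℓ coordinates distributed i.i.d. P_0. Then E_{P_PPM}[ P_PPM(Y)/P_0^{⊗n}(Y) ] = (1 + χ²(P_1‖P_0)/m)^ℓ ≤ exp( ℓ(ℓ+1) χ²(P_1‖P_0) / n ), where m = ⌊n/ℓ⌋.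 -/
/-!
The likelihood ratio of a product of independent blocks against the product reference measure is
the product of the blockwise ratios, so `E_P[P/P₀^⊗n]` factorizes over the blocks, and the i.i.d.
`P₀` tail contributes `1`. Within a block, `P^{m,1}/P₀^⊗m` is the average `(1/m) ∑ᵢ r(yᵢ)` of the
likelihood ratio `r = P₁/P₀`; under `P₀^⊗m` the `r(yᵢ)` are i.i.d. with mean `1` and second moment
`1 + χ²`, so `E_{P^{m,1}}[P^{m,1}/P₀^⊗m] = E_{P₀^⊗m}[((1/m) ∑ᵢ r(yᵢ))²] = 1 + χ²/m`.
The bound follows from `1 + x ≤ eˣ` and `n ≤ (ℓ + 1) m`, which holds because `n % ℓ < ℓ ≤ m`.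
-/

open Finset

section Products

variable {ι α β : Type*} [Fintype ι] [DecidableEq ι] [Fintype α] [Fintype β]

theorem sum_pi_prod (g : α → ℝ) :
    ∑ z : ι → α, ∏ i, g (z i) = (∑ a, g a) ^ Fintype.card ι := by
  rw [← Fintype.prod_sum fun _ => g, prod_const, card_univ]

theorem sum_pi_prod_mul_prod (p : α → ℝ) (φ : ι → α → ℝ) :
    ∑ z : ι → α, (∏ i, p (z i)) * ∏ i, φ i (z i) = ∏ i, ∑ a, p a * φ i a := by
  simp_rw [← prod_mul_distrib]
  exact (Fintype.prod_sum fun i a => p a * φ i a).symm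

theorem sum_pi_prod_mul_apply_mul_apply (p : α → ℝ) (hp : ∑ a, p a = 1) (f g : α → ℝ)
    (i i' : ι) :
    ∑ z : ι → α, (∏ j, p (z j)) * (f (z i) * g (z i')) =
      if i = i' then ∑ a, p a * (f a * g a) else (∑ a, p a * f a) * ∑ a, p a * g a := by
  have hfg : ∀ z : ι → α, f (z i) * g (z i') =
      ∏ j, (if j = i then f (z j) else 1) * (if j = i' then g (z j) else 1) := by
    intro z
    rw [prod_mul_distrib, prod_ite_eq', prod_ite_eq', if_pos (mem_univ _), if_pos (mem_univ _)]
  simp_rw [hfg]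
  refine (sum_pi_prod_mul_prod p
    fun j a => (if j = i then f a else 1) * (if j = i' then g a else 1)).trans ?_
  split_ifs with hii'
  · subst hii'
    rw [show ∑ a, p a * (f a * g a) = ∏ j, if j = i then ∑ a, p a * (f a * g a) else 1 by simp]
    refine prod_congr rfl fun j _ => ?_
    split_ifs <;> simp [hp]
  · rw [show (∑ a, p a * f a) * ∑ a, p a * g a =
        ∏ j, (if j = i then ∑ a, p a * f a else 1) * (if j = i' then ∑ a, p a * g a else 1) by
      rw [prod_mul_distrib, prod_ite_eq', prod_ite_eq', if_pos (mem_univ _), if_pos (mem_univ _)]]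
    refine prod_congr rfl fun j _ => ?_
    split_ifs with hi hi' <;> simp_all

theorem sum_pi_prod_mul_sum_sq (p : α → ℝ) (hp : ∑ a, p a = 1) (f : α → ℝ) :
    ∑ z : ι → α, (∏ j, p (z j)) * (∑ i, f (z i)) ^ 2 =
      (Fintype.card ι : ℝ) ^ 2 * (∑ a, p a * f a) ^ 2 +
        Fintype.card ι * (∑ a, p a * f a ^ 2 - (∑ a, p a * f a) ^ 2) := by
  have hexpand : ∀ z : ι → α, (∏ j, p (z j)) * (∑ i, f (z i)) ^ 2 =
      ∑ i, ∑ i', (∏ j, p (z j)) * (f (z i) * f (z i')) := by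
    intro z
    simp_rw [sq, sum_mul_sum, mul_sum]
  rw [sum_congr rfl fun z _ => hexpand z, sum_comm]
  rw [sum_congr rfl fun i _ => sum_comm]
  simp_rw [sum_pi_prod_mul_apply_mul_apply p hp]
  have hsplit : ∀ (i i' : ι) (A B : ℝ),
      (if i = i' then A else B) = B + if i = i' then A - B else 0 := by
    intro i i' A B; split_ifs <;> ring
  simp_rw [hsplit _ _ (∑ a, p a * (f a * f a)), sum_add_distrib, sum_ite_eq, if_pos (mem_univ _),
    sum_const, card_univ, nsmul_eq_mul]
  simp only [sq]
  ring

noncomputable def expectedRatio (p q : α → ℝ) : ℝ := ∑ x, p x * (p x / q x)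

theorem expectedRatio_self (p : α → ℝ) : expectedRatio p p = ∑ x, p x := by
  simp only [expectedRatio, ← mul_div_assoc, mul_self_div_self]

theorem expectedRatio_prod (p q : α → ℝ) (p' q' : β → ℝ) :
    expectedRatio (fun x : α × β => p x.1 * p' x.2) (fun x => q x.1 * q' x.2) =
      expectedRatio p q * expectedRatio p' q' := by
  rw [expectedRatio, Fintype.sum_prod_type, expectedRatio, expectedRatio, sum_mul_sum]
  refine sum_congr rfl fun a _ => sum_congr rfl fun b _ => ?_
  rw [mul_div_mul_comm]
  ring

theorem expectedRatio_pi (p q : α → ℝ) :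
    expectedRatio (fun z : ι → α => ∏ i, p (z i)) (fun z => ∏ i, q (z i)) =
      expectedRatio p q ^ Fintype.card ι := by
  simp only [expectedRatio, ← prod_div_distrib, ← prod_mul_distrib]
  exact sum_pi_prod fun a => p a * (p a / q a)

end Products

section SinglePulse

variable {Y : Type*} {P0 P1 : Y → ℝ}

noncomputable def chiSq [Fintype Y] (p q : Y → ℝ) : ℝ := ∑ y, (p y - q y) ^ 2 / q y

theorem chiSq_nonneg [Fintype Y] (p : Y → ℝ) {q : Y → ℝ} (hq : ∀ y, 0 ≤ q y) :
    0 ≤ chiSq p q :=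
  sum_nonneg fun y _ => div_nonneg (sq_nonneg _) (hq y)

theorem sum_mul_div_sq_eq_one_add_chiSq [Fintype Y] (hP0 : ∀ y, P0 y ≠ 0) (hP0sum : ∑ y, P0 y = 1)
    (hP1sum : ∑ y, P1 y = 1) :
    ∑ y, P0 y * (P1 y / P0 y) ^ 2 = 1 + chiSq P1 P0 := by
  have hpt : ∀ y, P0 y * (P1 y / P0 y) ^ 2 = (P1 y - P0 y) ^ 2 / P0 y + 2 * P1 y - P0 y := by
    intro y
    field_simp [hP0 y]
    ring
  rw [sum_congr rfl fun y _ => hpt y, sum_sub_distrib, sum_add_distrib, ← mul_sum, hP0sum,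
    hP1sum, chiSq]
  ring

/-- `P^{m,1}`: a uniformly chosen coordinate is drawn from `P1`, the others from `P0`. -/
noncomputable def singlePulse (m : ℕ) (P0 P1 : Y → ℝ) (y : Fin m → Y) : ℝ :=
  (1 / (m : ℝ)) * ∑ i, P1 (y i) * ∏ j ∈ univ.erase i, P0 (y j)

theorem singlePulse_eq_prod_mul (hP0 : ∀ y, P0 y ≠ 0) (m : ℕ) (z : Fin m → Y) :
    singlePulse m P0 P1 z = (∏ i, P0 (z i)) * ((1 / (m : ℝ)) * ∑ i, P1 (z i) / P0 (z i)) := by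
  rw [singlePulse, mul_left_comm (∏ i, P0 (z i))]
  congr 1
  rw [mul_sum]
  refine sum_congr rfl fun i _ => ?_
  rw [← mul_prod_erase univ (fun j => P0 (z j)) (mem_univ i)]
  field_simp [hP0 (z i)]

theorem expectedRatio_singlePulse [Fintype Y] (hP0 : ∀ y, 0 < P0 y) (hP0sum : ∑ y, P0 y = 1)
    (hP1sum : ∑ y, P1 y = 1) {m : ℕ} (hm : m ≠ 0) :
    expectedRatio (singlePulse m P0 P1) (fun z => ∏ i, P0 (z i)) = 1 + chiSq P1 P0 / m := by
  have hP0ne : ∀ y, P0 y ≠ 0 := fun y => (hP0 y).ne'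
  have hpt : ∀ z : Fin m → Y, singlePulse m P0 P1 z * (singlePulse m P0 P1 z / ∏ i, P0 (z i)) =
      1 / (m : ℝ) ^ 2 * ((∏ i, P0 (z i)) * (∑ i, P1 (z i) / P0 (z i)) ^ 2) := by
    intro z
    have hprod : ∏ i, P0 (z i) ≠ 0 := prod_ne_zero_iff.mpr fun i _ => hP0ne (z i)
    rw [singlePulse_eq_prod_mul hP0ne]
    field_simp
  have hmean : ∑ y, P0 y * (P1 y / P0 y) = 1 := by
    simp_rw [mul_div_cancel₀ _ (hP0ne _)]
    exact hP1sum
  rw [expectedRatio, sum_congr rfl fun z _ => hpt z, ← mul_sum,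
    sum_pi_prod_mul_sum_sq P0 hP0sum fun y => P1 y / P0 y, Fintype.card_fin, hmean,
    sum_mul_div_sq_eq_one_add_chiSq hP0ne hP0sum hP1sum]
  field_simp
  ring

end SinglePulse

theorem Nat.le_add_one_mul_div_of_mul_self_le {ℓ n : ℕ} (hℓ : 0 < ℓ) (h : ℓ * ℓ ≤ n) :
    n ≤ (ℓ + 1) * (n / ℓ) := by
  have hdiv := Nat.div_add_mod n ℓ
  have hmod := Nat.mod_lt n hℓ
  have hle : ℓ ≤ n / ℓ := (Nat.le_div_iff_mul_le hℓ).2 h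
  rw [add_one_mul]
  linarith

theorem one_add_div_pow_le_exp {x : ℝ} (hx : 0 ≤ x) {ℓ m n : ℕ} (hn : 0 < n)
    (hnm : n ≤ (ℓ + 1) * m) :
    (1 + x / m) ^ ℓ ≤ Real.exp (ℓ * (ℓ + 1) * x / n) := by
  have hm : (0 : ℝ) < m := Nat.cast_pos.mpr (Nat.pos_of_ne_zero (by rintro rfl; omega))
  have hn' : (0 : ℝ) < n := by exact_mod_cast hn
  have hnm' : (n : ℝ) ≤ (ℓ + 1) * m := by exact_mod_cast hnm
  have hdiv : x / m ≤ (ℓ + 1) * x / n := by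
    rw [div_le_div_iff₀ hm hn']
    nlinarith
  calc (1 + x / m) ^ ℓ ≤ Real.exp (x / m) ^ ℓ := by
        gcongr
        linarith [Real.add_one_le_exp (x / m)]
    _ = Real.exp (ℓ * (x / m)) := (Real.exp_nat_mul _ ℓ).symm
    _ ≤ Real.exp (ℓ * (ℓ + 1) * x / n) := by
        rw [Real.exp_le_exp, mul_assoc, mul_div_assoc]
        gcongr

theorem ppm_expected_ratio_general {Y : Type*} [Fintype Y]
    (P0 P1 : Y → ℝ) (hP00 : ∀ y, 0 < P0 y)
    (hP01 : ∑ y, P0 y = 1) (hP11 : ∑ y, P1 y = 1)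
    (ℓ m n : ℕ) (hℓ : 1 ≤ ℓ)
    (hmdef : m = n / ℓ) (hℓn : ℓ * ℓ ≤ n)
    (Pm1 : (Fin m → Y) → ℝ)
    (hPm1 : ∀ y, Pm1 y =
      (1 / (m : ℝ)) * ∑ i, P1 (y i) * ∏ j ∈ Finset.univ.erase i, P0 (y j))
    (PPPM : ((Fin ℓ → (Fin m → Y)) × (Fin (n - m * ℓ) → Y)) → ℝ)
    (hPPPM : ∀ yc, PPPM yc = (∏ b, Pm1 (yc.1 b)) * ∏ k, P0 (yc.2 k))
    (chi2 : ℝ) (hchi2 : chi2 = ∑ y, (P1 y - P0 y) ^ 2 / P0 y) :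
    (∑ yc : (Fin ℓ → (Fin m → Y)) × (Fin (n - m * ℓ) → Y),
        PPPM yc * (PPPM yc /
          ((∏ b, ∏ i, P0 (yc.1 b i)) * ∏ k, P0 (yc.2 k))))
      = (1 + chi2 / (m : ℝ)) ^ ℓ ∧
    (1 + chi2 / (m : ℝ)) ^ ℓ ≤
      Real.exp ((ℓ : ℝ) * ((ℓ : ℝ) + 1) * chi2 / (n : ℝ)) := by
  have hn : 0 < n := (Nat.mul_pos hℓ hℓ).trans_le hℓn
  have hmn : n ≤ (ℓ + 1) * m := hmdef ▸ Nat.le_add_one_mul_div_of_mul_self_le hℓ hℓn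
  have hm : m ≠ 0 := by
    rintro rfl
    omega
  obtain rfl : Pm1 = singlePulse m P0 P1 := funext hPm1
  obtain rfl : PPPM = fun yc => (∏ b, singlePulse m P0 P1 (yc.1 b)) * ∏ k, P0 (yc.2 k) :=
    funext hPPPM
  obtain rfl : chi2 = chiSq P1 P0 := hchi2
  refine ⟨?_, one_add_div_pow_le_exp (chiSq_nonneg P1 fun y => (hP00 y).le) hn hmn⟩
  have hsplit := expectedRatio_prod
    (fun x : Fin ℓ → Fin m → Y => ∏ b, singlePulse m P0 P1 (x b)) (fun x => ∏ b, ∏ i, P0 (x b i))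
    (fun w : Fin (n - m * ℓ) → Y => ∏ k, P0 (w k)) (fun w => ∏ k, P0 (w k))
  have hblocks := expectedRatio_pi (ι := Fin ℓ) (singlePulse m P0 P1) fun z => ∏ i, P0 (z i)
  rw [Fintype.card_fin, expectedRatio_singlePulse hP00 hP01 hP11 hm] at hblocks
  have htail : expectedRatio (fun w : Fin (n - m * ℓ) → Y => ∏ k, P0 (w k))
      (fun w => ∏ k, P0 (w k)) = 1 := by
    rw [expectedRatio_self, sum_pi_prod, hP01, one_pow]
  rw [hblocks, htail, mul_one] at hsplit
  exact hsplit

theorem ppm_expected_ratio {Y : Type*} [Fintype Y]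
    (P0 P1 : Y → ℝ) (hP00 : ∀ y, 0 < P0 y) (hP10 : ∀ y, 0 ≤ P1 y)
    (hP01 : ∑ y, P0 y = 1) (hP11 : ∑ y, P1 y = 1)
    (ℓ m n : ℕ) (hℓ : 1 ≤ ℓ) (hm : 1 ≤ m) (hn : m * ℓ ≤ n)
    (hmdef : m = n / ℓ) (hℓn : ℓ * ℓ ≤ n)
    (Pm1 : (Fin m → Y) → ℝ)
    (hPm1 : ∀ y, Pm1 y =
      (1 / (m : ℝ)) * ∑ i, P1 (y i) * ∏ j ∈ Finset.univ.erase i, P0 (y j))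
    (PPPM : ((Fin ℓ → (Fin m → Y)) × (Fin (n - m * ℓ) → Y)) → ℝ)
    (hPPPM : ∀ yc, PPPM yc = (∏ b, Pm1 (yc.1 b)) * ∏ k, P0 (yc.2 k))
    (chi2 : ℝ) (hchi2 : chi2 = ∑ y, (P1 y - P0 y) ^ 2 / P0 y) :
    (∑ yc : (Fin ℓ → (Fin m → Y)) × (Fin (n - m * ℓ) → Y),
        PPPM yc * (PPPM yc /
          ((∏ b, ∏ i, P0 (yc.1 b i)) * ∏ k, P0 (yc.2 k))))
      = (1 + chi2 / (m : ℝ)) ^ ℓ ∧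
    (1 + chi2 / (m : ℝ)) ^ ℓ ≤
      Real.exp ((ℓ : ℝ) * ((ℓ : ℝ) + 1) * chi2 / (n : ℝ)) :=
  ppm_expected_ratio_general P0 P1 hP00 hP01 hP11 ℓ m n hℓ hmdef hℓn Pm1 hPm1 PPPM hPPPM chi2 hchi2
end
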